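/- Fix a finite set V and a real number p with 1 ≤ p < ∞, and consider the symmetric monoidal lattice ([0, ∞], ≤, +_p, 0). The graph distance δ_{+_p} is an extended metric on the set of [0, ∞]-graphs with vertex set V: for all G, G', G'' : V × V → [0, ∞], (1) δ_{+_p}(G, G') = 0 if and only if G = G'; (2) δ_{+_p}(G, G') = δ_{+_p}(G', G); (3) δ_{+_p}(G, G') ≤ δ_{+_p}(G, G'') + δ_{+_p}(G'', G'), where + is ordinary extended-real addition. -/

import Mathlib

open scoped ENNReal

/-- The `p`-sum `a +_p b = (a^p + b^p)^{1/p}` on the extended nonnegative reals. -/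
noncomputable def psum (p : ℝ) (a b : ℝ≥0∞) : ℝ≥0∞ := (a ^ p + b ^ p) ^ (1 / p)

/-- The left adjoint `λ_t(s) = inf {c : s ≤ t +_p c}` of `c ↦ t +_p c`. -/
noncomputable def lamP (p : ℝ) (t s : ℝ≥0∞) : ℝ≥0∞ := sInf {c : ℝ≥0∞ | s ≤ psum p t c}

/-- The directed graph distance `δ⃗_{+_p}(G, G') = sup_{v,v'} λ_{G(v,v')}(G'(v,v'))`. -/
noncomputable def dirDistP (p : ℝ) {V : Type} (G G' : V → V → ℝ≥0∞) : ℝ≥0∞ :=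
  ⨆ v : V, ⨆ v' : V, lamP p (G v v') (G' v v')

/-- The graph distance `δ_{+_p}(G, G') = sup {δ⃗_{+_p}(G, G'), δ⃗_{+_p}(G', G)}`. -/
noncomputable def graphDistP (p : ℝ) {V : Type} (G G' : V → V → ℝ≥0∞) : ℝ≥0∞ :=
  dirDistP p G G' ⊔ dirDistP p G' G

/-!
The residual `λ_t(s)` has the closed form `(s^p - t^p)^{1/p}` (truncated subtraction). It vanishes
exactly when `s ≤ t`, and it satisfies the triangle inequality because truncated differences of
`p`-th powers are subadditive along a chain `a, b, c` and `x ↦ x^{1/p}` is subadditive for `p ≥ 1`.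
Both properties pass to suprema over the vertex pairs, and symmetrizing with `⊔` gives the metric.
-/

section Residual

variable {p : ℝ}

lemma le_psum_iff (hp : 0 < p) {s t c : ℝ≥0∞} :
    s ≤ psum p t c ↔ (s ^ p - t ^ p) ^ (1 / p) ≤ c := by
  unfold psum
  rw [← ENNReal.rpow_le_rpow_iff hp (x := s), one_div, ENNReal.rpow_inv_rpow hp.ne',
    ← tsub_le_iff_left, ← ENNReal.rpow_le_rpow_iff (inv_pos.mpr hp) (y := c ^ p),
    ENNReal.rpow_rpow_inv hp.ne']

lemma lamP_eq_rpow_tsub (hp : 0 < p) (t s : ℝ≥0∞) :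
    lamP p t s = (s ^ p - t ^ p) ^ (1 / p) := by
  have hset : {c : ℝ≥0∞ | s ≤ psum p t c} = Set.Ici ((s ^ p - t ^ p) ^ (1 / p)) := by
    ext c
    exact le_psum_iff hp
  rw [lamP, hset, csInf_Ici]

lemma lamP_eq_zero_iff (hp : 0 < p) {t s : ℝ≥0∞} : lamP p t s = 0 ↔ s ≤ t := by
  rw [lamP_eq_rpow_tsub hp, ENNReal.rpow_eq_zero_iff_of_pos (one_div_pos.mpr hp),
    tsub_eq_zero_iff_le, ENNReal.rpow_le_rpow_iff hp]

lemma lamP_le_add (hp : 1 ≤ p) (a b c : ℝ≥0∞) :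
    lamP p a c ≤ lamP p a b + lamP p b c := by
  have hp0 : 0 < p := one_pos.trans_le hp
  rw [lamP_eq_rpow_tsub hp0, lamP_eq_rpow_tsub hp0, lamP_eq_rpow_tsub hp0]
  calc (c ^ p - a ^ p) ^ (1 / p)
      ≤ ((c ^ p - b ^ p) + (b ^ p - a ^ p)) ^ (1 / p) :=
        ENNReal.rpow_le_rpow tsub_le_tsub_add_tsub (by positivity)
    _ ≤ (c ^ p - b ^ p) ^ (1 / p) + (b ^ p - a ^ p) ^ (1 / p) :=
        ENNReal.rpow_add_le_add_rpow _ _ (by positivity) ((div_le_one hp0).mpr hp)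
    _ = (b ^ p - a ^ p) ^ (1 / p) + (c ^ p - b ^ p) ^ (1 / p) := add_comm _ _

end Residual

section GraphDistance

variable {p : ℝ} {V : Type} {G G' G'' : V → V → ℝ≥0∞}

lemma dirDistP_eq_zero_iff (hp : 0 < p) : dirDistP p G G' = 0 ↔ G' ≤ G := by
  simp only [dirDistP, ENNReal.iSup_eq_zero, lamP_eq_zero_iff hp, Pi.le_def]

lemma dirDistP_le_add (hp : 1 ≤ p) : dirDistP p G G' ≤ dirDistP p G G'' + dirDistP p G'' G' :=
  iSup₂_le fun v v' =>
    (lamP_le_add hp _ (G'' v v') _).trans <| add_le_add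
      (le_iSup₂ (f := fun a b => lamP p (G a b) (G'' a b)) v v')
      (le_iSup₂ (f := fun a b => lamP p (G'' a b) (G' a b)) v v')

lemma graphDistP_comm : graphDistP p G G' = graphDistP p G' G :=
  sup_comm _ _

lemma graphDistP_eq_zero_iff (hp : 0 < p) : graphDistP p G G' = 0 ↔ G = G' := by
  rw [graphDistP, max_eq_zero, dirDistP_eq_zero_iff hp, dirDistP_eq_zero_iff hp, and_comm,
    le_antisymm_iff]

lemma graphDistP_le_add (hp : 1 ≤ p) :
    graphDistP p G G' ≤ graphDistP p G G'' + graphDistP p G'' G' := by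
  refine sup_le ?_ ?_
  · calc dirDistP p G G' ≤ dirDistP p G G'' + dirDistP p G'' G' := dirDistP_le_add hp
      _ ≤ graphDistP p G G'' + graphDistP p G'' G' := add_le_add le_sup_left le_sup_left
  · calc dirDistP p G' G ≤ dirDistP p G'' G + dirDistP p G' G'' :=
          (dirDistP_le_add hp).trans_eq (add_comm _ _)
      _ ≤ graphDistP p G G'' + graphDistP p G'' G' := add_le_add le_sup_right le_sup_right

end GraphDistance

theorem graphDistP_extended_metric_general (p : ℝ) (hp : 1 ≤ p) {V : Type}
    (G G' G'' : V → V → ℝ≥0∞) :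
    (graphDistP p G G' = 0 ↔ G = G') ∧
    (graphDistP p G G' = graphDistP p G' G) ∧
    (graphDistP p G G' ≤ graphDistP p G G'' + graphDistP p G'' G') :=
  ⟨graphDistP_eq_zero_iff (one_pos.trans_le hp), graphDistP_comm, graphDistP_le_add hp⟩

/-- For `1 ≤ p < ∞`, the graph distance `δ_{+_p}` is an extended metric on
the set of `[0, ∞]`-graphs on a finite vertex set `V`: it vanishes exactly on equal
graphs, it is symmetric, and it satisfies the triangle inequality with respect to
ordinary extended-real addition. -/
theorem graphDistP_extended_metric (p : ℝ) (hp : 1 ≤ p) {V : Type} [Fintype V]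
    (G G' G'' : V → V → ℝ≥0∞) :
    (graphDistP p G G' = 0 ↔ G = G') ∧
    (graphDistP p G G' = graphDistP p G' G) ∧
    (graphDistP p G G' ≤ graphDistP p G G'' + graphDistP p G'' G') :=
  graphDistP_extended_metric_general p hp G G' G''
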